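/- Consider Optimistic-FTRL on a convex compact set Y with loss vectors θ_1, ..., θ_T, hints m_1, ..., m_T, a β-strongly convex regularizer R, and step size η > 0. Let y_t = argmin_{y ∈ Y} ⟨y, Σ_{s<t} θ_s + m_t⟩ + (1/η)R(y), z_t = argmin_{y ∈ Y} ⟨y, Σ_{s<t} θ_s⟩ + (1/η)R(y), and z = argmin_{y ∈ Y} R(y). Then for any y* ∈ Y, Σ_{t=1}^T ⟨y_t − y*, θ_t⟩ ≤ (1/η)[R(y*) − R(z) − (β/2)(Σ_t ‖y_t − z_t‖² + Σ_t ‖y_t − z_{t+1}‖²)] + (η/β) Σ_t ‖θ_t − m_t‖_*². -/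

import Mathlib

/-!
Write `Φ_t v = ⟨v, ∑_{s<t} θ_s⟩ + R v / η`, so that `z_t` minimizes `Φ_t` and `y_t` minimizes
`Φ_t + m_t` over `Y`. Since `R` is `β`-strongly convex, each of these objectives exceeds its
minimum at `u` by at least `c ‖u - minimizer‖²`, `c = β / (2η)`. Applying this to the minimizers
`z_t`, `y_t`, `z_{t+1}` at the other points gives, for each round,
`θ_t(y_t) ≤ Φ_{t+1}(z_{t+1}) - Φ_t(z_t) + (η/β)‖θ_t - m_t‖² - c‖y_t - z_t‖² - c‖y_t - z_{t+1}‖²`,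
where the dual-norm term comes from
`2c‖y_t - z_{t+1}‖² ≤ ⟨θ_t - m_t, y_t - z_{t+1}⟩ ≤ ‖θ_t - m_t‖ ‖y_t - z_{t+1}‖`.
Summing over the rounds telescopes, and `Φ_T(z_T) ≤ Φ_T(y*)`.
-/

open Filter Topology

section

variable {E : Type*} [NormedAddCommGroup E] [NormedSpace ℝ E]

section StrongConvexity

variable {s : Set E} {m : ℝ} {f g : E → ℝ}

theorem strongConvexOn_of_subgradient (hs : Convex ℝ s) (f' : E → StrongDual ℝ E)
    (hf : ∀ u ∈ s, ∀ v ∈ s, f v + f' v (u - v) + m / 2 * ‖u - v‖ ^ 2 ≤ f u) :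
    StrongConvexOn s m f := by
  refine ⟨hs, fun x hx y hy a b ha hb hab => ?_⟩
  obtain rfl : a = 1 - b := by linarith
  set p := (1 - b) • x + b • y
  have hp : p ∈ s := hs hx hy ha hb hab
  have hxp : x - p = b • (x - y) := by simp only [p]; module
  have hyp : y - p = (-(1 - b)) • (x - y) := by simp only [p]; module
  have hfx := hf x hx p hp
  have hfy := hf y hy p hp
  rw [hxp, map_smul, norm_smul, Real.norm_of_nonneg hb, smul_eq_mul] at hfx
  rw [hyp, map_smul, norm_smul, norm_neg, Real.norm_of_nonneg ha, smul_eq_mul] at hfy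
  simp only [smul_eq_mul]
  nlinarith [mul_le_mul_of_nonneg_left hfx ha, mul_le_mul_of_nonneg_left hfy hb]

theorem StrongConvexOn.smul {c : ℝ} (hf : StrongConvexOn s m f) (hc : 0 ≤ c) :
    StrongConvexOn s (c * m) (c • f) := by
  refine ⟨hf.1, fun x hx y hy a b ha hb hab => ?_⟩
  have h := mul_le_mul_of_nonneg_left (hf.2 hx hy ha hb hab) hc
  simp only [Pi.smul_apply, smul_eq_mul] at h ⊢
  linarith

theorem StrongConvexOn.add_convexOn (hf : StrongConvexOn s m f) (hg : ConvexOn ℝ s g) :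
    StrongConvexOn s m (f + g) := by
  have h := hf.add hg.uniformConvexOn_zero
  rwa [add_zero] at h

theorem StrongConvexOn.add_sq_le_of_isMinOn {w u : E} (hf : StrongConvexOn s m f)
    (hmin : IsMinOn f s w) (hw : w ∈ s) (hu : u ∈ s) :
    f w + m / 2 * ‖u - w‖ ^ 2 ≤ f u := by
  -- compare `f w` with `f` at the point `a • u + (1 - a) • w` of the segment, then let `a → 0`
  have key : ∀ a ∈ Set.Ioo (0 : ℝ) 1, (1 - a) * (m / 2 * ‖u - w‖ ^ 2) ≤ f u - f w := by
    rintro a ⟨ha0, ha1⟩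
    have hconv := hf.2 hu hw ha0.le (by linarith : 0 ≤ 1 - a) (by ring)
    have hmin' := isMinOn_iff.1 hmin _ (hf.1 hu hw ha0.le (by linarith : 0 ≤ 1 - a) (by ring))
    simp only [smul_eq_mul] at hconv
    have : a * ((1 - a) * (m / 2 * ‖u - w‖ ^ 2)) ≤ a * (f u - f w) := by nlinarith
    exact le_of_mul_le_mul_left this ha0
  have hlim : Tendsto (fun a : ℝ => (1 - a) * (m / 2 * ‖u - w‖ ^ 2)) (𝓝[>] 0)
      (𝓝 (m / 2 * ‖u - w‖ ^ 2)) := by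
    have : Continuous (fun a : ℝ => (1 - a) * (m / 2 * ‖u - w‖ ^ 2)) := by fun_prop
    simpa using (this.tendsto 0).mono_left nhdsWithin_le_nhds
  linarith [le_of_tendsto hlim (eventually_of_mem (Ioo_mem_nhdsGT one_pos) key)]

theorem StrongConvexOn.dual_add_smul_add_sq_le {w u : E} (hf : StrongConvexOn s m f) {c : ℝ}
    (hc : 0 ≤ c) (L : StrongDual ℝ E) (hmin : ∀ v ∈ s, L w + c * f w ≤ L v + c * f v)
    (hw : w ∈ s) (hu : u ∈ s) :
    L w + c * f w + c * m / 2 * ‖u - w‖ ^ 2 ≤ L u + c * f u := by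
  have h := ((hf.smul hc).add_convexOn (L.toLinearMap.convexOn hf.1)).add_sq_le_of_isMinOn
    (isMinOn_iff.2 fun v hv => by simpa [add_comm] using hmin v hv) hw hu
  simp only [Pi.add_apply, Pi.smul_apply, smul_eq_mul, ContinuousLinearMap.coe_coe] at h
  linarith

end StrongConvexity

theorem optimistic_round_le_of_growth {Φ : E → ℝ} {θ m : StrongDual ℝ E} {c : ℝ} (hc : 0 < c)
    {y z z' : E}
    (hz : Φ z + c * ‖y - z‖ ^ 2 ≤ Φ y)
    (hy : Φ y + m y + c * ‖z' - y‖ ^ 2 ≤ Φ z' + m z')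
    (hz' : Φ z' + θ z' + c * ‖y - z'‖ ^ 2 ≤ Φ y + θ y) :
    θ y ≤ (Φ z' + θ z') - Φ z +
      (‖θ - m‖ ^ 2 / (2 * c) - c * ‖y - z‖ ^ 2 - c * ‖y - z'‖ ^ 2) := by
  rw [norm_sub_rev] at hy
  have hgap : (θ - m) (y - z') = θ y - m y - (θ z' - m z') := by
    simp only [sub_apply, map_sub]
  have hlow : 2 * c * ‖y - z'‖ ^ 2 ≤ (θ - m) (y - z') := by linarith
  have hup : (θ - m) (y - z') ≤ ‖θ - m‖ * ‖y - z'‖ :=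
    (Real.le_norm_self _).trans ((θ - m).le_opNorm _)
  have hpair : (θ - m) (y - z') ≤ ‖θ - m‖ ^ 2 / (2 * c) := by
    rw [le_div_iff₀ (by positivity)]
    nlinarith [sq_nonneg (‖θ - m‖ - 2 * c * ‖y - z'‖), mul_le_mul_of_nonneg_left hup hc.le,
      mul_le_mul_of_nonneg_left hlow hc.le]
  linarith

section OptimisticFTRL

variable (θ : ℕ → StrongDual ℝ E) (R : E → ℝ) (η : ℝ)

-- `z t` minimizes `ftrlObjective θ R η t` over `Y`, and `y t` minimizes it plus the hint `m t`.
noncomputable def ftrlObjective (t : ℕ) (v : E) : ℝ :=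
  (∑ s ∈ Finset.range t, θ s) v + 1 / η * R v

theorem ftrlObjective_zero (v : E) : ftrlObjective θ R η 0 v = 1 / η * R v := by
  simp [ftrlObjective]

theorem ftrlObjective_succ (t : ℕ) (v : E) :
    ftrlObjective θ R η (t + 1) v = ftrlObjective θ R η t v + θ t v := by
  simp only [ftrlObjective, Finset.sum_range_succ, add_apply]
  ring

variable {θ R η}

theorem ftrlObjective_optimistic_round_le {Y : Set E} {β : ℝ} (hR : StrongConvexOn Y β R)
    (hβ : 0 < β) (hη : 0 < η) {t : ℕ} {m : StrongDual ℝ E} {y z z' : E}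
    (hyY : y ∈ Y) (hzY : z ∈ Y) (hz'Y : z' ∈ Y)
    (hy : ∀ v ∈ Y, ftrlObjective θ R η t y + m y ≤ ftrlObjective θ R η t v + m v)
    (hz : ∀ v ∈ Y, ftrlObjective θ R η t z ≤ ftrlObjective θ R η t v)
    (hz' : ∀ v ∈ Y, ftrlObjective θ R η (t + 1) z' ≤ ftrlObjective θ R η (t + 1) v) :
    θ t y ≤ ftrlObjective θ R η (t + 1) z' - ftrlObjective θ R η t z +
      (η / β * ‖θ t - m‖ ^ 2 - β / (2 * η) * ‖y - z‖ ^ 2 - β / (2 * η) * ‖y - z'‖ ^ 2) := by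
  have growth {L : StrongDual ℝ E} {w : E}
      (hmin : ∀ v ∈ Y, ftrlObjective θ R η t w + L w ≤ ftrlObjective θ R η t v + L v)
      (hw : w ∈ Y) {u : E} (hu : u ∈ Y) :
      ftrlObjective θ R η t w + L w + β / (2 * η) * ‖u - w‖ ^ 2 ≤
        ftrlObjective θ R η t u + L u := by
    have h := hR.dual_add_smul_add_sq_le (c := 1 / η) (by positivity)
      (∑ s ∈ Finset.range t, θ s + L)
      (fun v hv => by simpa only [ftrlObjective, add_apply, add_right_comm] using hmin v hv) hw hu
    simp only [ftrlObjective, add_apply, show 1 / η * β / 2 = β / (2 * η) by ring] at h ⊢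
    linarith
  have hzy := growth (L := 0) (by simpa using hz) hzY hyY
  have hz'y := growth (L := θ t) (by simpa only [ftrlObjective_succ] using hz') hz'Y hyY
  simp only [zero_apply, add_zero] at hzy
  have h := optimistic_round_le_of_growth (by positivity) hzy (growth hy hyY hz'Y) hz'y
  have hdual : ‖θ t - m‖ ^ 2 / (2 * (β / (2 * η))) = η / β * ‖θ t - m‖ ^ 2 := by field_simp
  rwa [← ftrlObjective_succ, hdual] at h

end OptimisticFTRL

end

theorem stmt_10_general {E : Type*} [NormedAddCommGroup E] [NormedSpace ℝ E]
    (Y : Set E) (hY : Convex ℝ Y)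
    (R : E → ℝ) (R' : E → StrongDual ℝ E) (β η : ℝ) (hβ : 0 < β) (hη : 0 < η)
    (hsc : ∀ u ∈ Y, ∀ v ∈ Y, R u ≥ R v + R' v (u - v) + β / 2 * ‖u - v‖ ^ 2)
    (T : ℕ) (θ m : ℕ → StrongDual ℝ E) (y z : ℕ → E)
    (hyY : ∀ t, y t ∈ Y) (hzY : ∀ t, z t ∈ Y)
    (hy : ∀ t, ∀ v ∈ Y,
      ((∑ s ∈ Finset.range t, θ s) + m t) (y t) + (1 / η) * R (y t) ≤
        ((∑ s ∈ Finset.range t, θ s) + m t) v + (1 / η) * R v)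
    (hz : ∀ t, ∀ v ∈ Y,
      (∑ s ∈ Finset.range t, θ s) (z t) + (1 / η) * R (z t) ≤
        (∑ s ∈ Finset.range t, θ s) v + (1 / η) * R v) :
    ∀ ystar ∈ Y,
      ∑ t ∈ Finset.range T, θ t (y t - ystar) ≤
        (1 / η) * (R ystar - R (z 0) -
          β / 2 * ((∑ t ∈ Finset.range T, ‖y t - z t‖ ^ 2) +
            ∑ t ∈ Finset.range T, ‖y t - z (t + 1)‖ ^ 2)) +
        (η / β) * ∑ t ∈ Finset.range T, ‖θ t - m t‖ ^ 2 := by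
  intro ystar hstar
  have hR := strongConvexOn_of_subgradient hY R' hsc
  have hy' (t : ℕ) (v : E) (hv : v ∈ Y) :
      ftrlObjective θ R η t (y t) + m t (y t) ≤ ftrlObjective θ R η t v + m t v := by
    simpa only [ftrlObjective, add_apply, add_right_comm] using hy t v hv
  have hsum := Finset.sum_le_sum fun t (_ : t ∈ Finset.range T) =>
    ftrlObjective_optimistic_round_le hR hβ hη (hyY t) (hzY t) (hzY (t + 1)) (hy' t) (hz t)
      (hz (t + 1))
  rw [Finset.sum_add_distrib, Finset.sum_range_sub (fun t => ftrlObjective θ R η t (z t)),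
    Finset.sum_sub_distrib, Finset.sum_sub_distrib, ← Finset.mul_sum, ← Finset.mul_sum,
    ← Finset.mul_sum, ftrlObjective_zero, show β / (2 * η) = 1 / η * (β / 2) by ring] at hsum
  have hend :
      ftrlObjective θ R η T (z T) ≤ ∑ t ∈ Finset.range T, θ t ystar + 1 / η * R ystar := by
    simpa only [ftrlObjective, sum_apply] using hz T ystar hstar
  simp only [map_sub, Finset.sum_sub_distrib]
  linarith

/-- Regret bound for Optimistic-FTRL with a `β`-strongly convex regularizer.
Losses `θ t` and hints `m t` are elements of the dual space; `y t` is the optimistic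
iterate, `z t` the plain FTRL iterate, and `z 0` minimizes `R` over `Y`. -/
theorem stmt_10 {E : Type*} [NormedAddCommGroup E] [NormedSpace ℝ E]
    (Y : Set E) (hY : Convex ℝ Y) (hYc : IsCompact Y)
    (R : E → ℝ) (R' : E → StrongDual ℝ E) (β η : ℝ) (hβ : 0 < β) (hη : 0 < η)
    (hsc : ∀ u ∈ Y, ∀ v ∈ Y, R u ≥ R v + R' v (u - v) + β / 2 * ‖u - v‖ ^ 2)
    (T : ℕ) (θ m : ℕ → StrongDual ℝ E) (y z : ℕ → E)
    (hyY : ∀ t, y t ∈ Y) (hzY : ∀ t, z t ∈ Y)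
    (hy : ∀ t, ∀ v ∈ Y,
      ((∑ s ∈ Finset.range t, θ s) + m t) (y t) + (1 / η) * R (y t) ≤
        ((∑ s ∈ Finset.range t, θ s) + m t) v + (1 / η) * R v)
    (hz : ∀ t, ∀ v ∈ Y,
      (∑ s ∈ Finset.range t, θ s) (z t) + (1 / η) * R (z t) ≤
        (∑ s ∈ Finset.range t, θ s) v + (1 / η) * R v) :
    ∀ ystar ∈ Y,
      ∑ t ∈ Finset.range T, θ t (y t - ystar) ≤
        (1 / η) * (R ystar - R (z 0) -
          β / 2 * ((∑ t ∈ Finset.range T, ‖y t - z t‖ ^ 2) +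
            ∑ t ∈ Finset.range T, ‖y t - z (t + 1)‖ ^ 2)) +
        (η / β) * ∑ t ∈ Finset.range T, ‖θ t - m t‖ ^ 2 :=
  stmt_10_general Y hY R R' β η hβ hη hsc T θ m y z hyY hzY hy hz
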